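/- For a positive integer n, x(n) = z(n) − (r(n)+1)·m(n) < 0 if and only if either n ≤ 435, or n = 450, or 513 ≤ n ≤ 528. -/

import Mathlib

/-!
Write `z = ⌊(2n - 1)/3⌋`, `r = ⌈log₂ n⌉` and `m = ⌊√(2n)⌋`. Since `m² ≤ 2n` and,
once `n > 2¹⁰`, `9 (r + 1)² ≤ 2^r < 2n`, we get `(3 (r + 1) m)² < (2n)²`, so `3 (r + 1) m < 2n`
and `x(n) ≥ 0` for all large `n`. Below `2¹⁰` the sign of `x(n)` is decided by computation,
after the square root is eliminated through `q < m ↔ (q + 1)² ≤ 2n`.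
-/

open Nat

lemma nine_mul_succ_sq_le_two_pow {k : ℕ} (hk : 11 ≤ k) : 9 * (k + 1) ^ 2 ≤ 2 ^ k := by
  induction k, hk using Nat.le_induction with
  | base => norm_num
  | succ k _ ih =>
    calc 9 * (k + 1 + 1) ^ 2 ≤ 2 * (9 * (k + 1) ^ 2) := by nlinarith
      _ ≤ 2 * 2 ^ k := by omega
      _ = 2 ^ (k + 1) := by ring

lemma nine_mul_succ_clog_sq_lt {n : ℕ} (hn : 2 ^ 10 < n) : 9 * (clog 2 n + 1) ^ 2 < 2 * n := by
  have h11 : 11 ≤ clog 2 n := (lt_clog_iff_pow_lt one_lt_two).2 hn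
  have hpred : 2 ^ (clog 2 n - 1) < n := pow_pred_clog_lt_self one_lt_two (by omega)
  calc 9 * (clog 2 n + 1) ^ 2 ≤ 2 ^ clog 2 n := nine_mul_succ_sq_le_two_pow h11
    _ = 2 * 2 ^ (clog 2 n - 1) := by rw [← pow_succ']; congr 1; omega
    _ < 2 * n := by omega

lemma three_mul_succ_clog_mul_lt {n M : ℕ} (hn : 2 ^ 10 < n) (hM : M ^ 2 ≤ 2 * n) :
    3 * ((clog 2 n + 1) * M) < 2 * n := by
  refine lt_of_pow_lt_pow_left₀ 2 (by positivity) ?_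
  calc (3 * ((clog 2 n + 1) * M)) ^ 2 = 9 * (clog 2 n + 1) ^ 2 * M ^ 2 := by ring
    _ < 2 * n * (2 * n) := Nat.mul_lt_mul_of_lt_of_le (nine_mul_succ_clog_sq_lt hn) hM (by omega)
    _ = (2 * n) ^ 2 := by ring

lemma lt_mul_iff_of_isGreatest_sq {N m a b : ℕ} (hm : IsGreatest {w | w ^ 2 ≤ N} m)
    (ha : 0 < a) : b < a * m ↔ (b / a + 1) ^ 2 ≤ N := by
  rw [mul_comm, ← Nat.div_lt_iff_lt_mul ha, ← Nat.succ_le_iff]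
  exact ⟨fun h => (Nat.pow_le_pow_left h 2).trans hm.1, fun h => hm.2 h⟩

lemma eq_clog_of_isLeast {n r : ℕ} (hr : IsLeast {s | n ≤ 2 ^ s} r) : r = clog 2 n :=
  hr.unique ⟨le_pow_clog one_lt_two n, fun _ hs => clog_le_of_le_pow hs⟩

lemma eq_div_three_of_isGreatest {n : ℕ} {z : ℤ} (hn : 1 ≤ n)
    (hz : IsGreatest {w : ℤ | 3 * w < 2 * n} z) : z = ((2 * n - 1) / 3 : ℕ) := by
  have hlt : 3 * z < 2 * n := hz.1
  have hle : (((2 * n - 1) / 3 : ℕ) : ℤ) ≤ z :=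
    hz.2 (show 3 * (((2 * n - 1) / 3 : ℕ) : ℤ) < 2 * n by omega)
  omega

set_option maxRecDepth 100000 in
lemma succ_div_succ_clog_sq_le_iff : ∀ n ≤ 2 ^ 10, 1 ≤ n →
    (((2 * n - 1) / 3 / (clog 2 n + 1) + 1) ^ 2 ≤ 2 * n ↔
      n ≤ 435 ∨ n = 450 ∨ (513 ≤ n ∧ n ≤ 528)) := by
  decide

theorem stmt_general
    (z : ℕ → ℤ) (m r : ℕ → ℕ) (x : ℕ → ℤ)
    (hz : ∀ n : ℕ, 1 ≤ n → 3 * z n < 2 * (n : ℤ) ∧ ∀ w : ℤ, 3 * w < 2 * (n : ℤ) → w ≤ z n)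
    (hm : ∀ n : ℕ, 1 ≤ n → (m n : ℤ) ^ 2 ≤ 2 * (n : ℤ) ∧ ∀ w : ℕ, (w : ℤ) ^ 2 ≤ 2 * (n : ℤ) → w ≤ m n)
    (hr : ∀ n : ℕ, 1 ≤ n → n ≤ 2 ^ r n ∧ ∀ s : ℕ, n ≤ 2 ^ s → r n ≤ s)
    (hx : ∀ n : ℕ, x n = z n - ((r n : ℤ) + 1) * (m n : ℤ)) :
    ∀ n : ℕ, 1 ≤ n →
      (x n < 0 ↔ n ≤ 435 ∨ n = 450 ∨ (513 ≤ n ∧ n ≤ 528)) := by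
  intro n hn
  have hmn : IsGreatest {w | w ^ 2 ≤ 2 * n} (m n) :=
    ⟨by exact_mod_cast (hm n hn).1, fun w hw => (hm n hn).2 w (by exact_mod_cast hw)⟩
  rw [hx, sub_neg, eq_div_three_of_isGreatest hn (hz n hn), eq_clog_of_isLeast (hr n hn)]
  norm_cast
  rcases le_or_gt n (2 ^ 10) with hsmall | hlarge
  · rw [lt_mul_iff_of_isGreatest_sq hmn (Nat.succ_pos _)]
    exact succ_div_succ_clog_sq_le_iff n hsmall hn
  · have := three_mul_succ_clog_mul_lt hlarge hmn.1
    constructor <;> intro h <;> omega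

theorem stmt
    (z : ℕ → ℤ) (m r : ℕ → ℕ) (c x : ℕ → ℤ) (y : ℕ → ℚ)
    (hz : ∀ n : ℕ, 1 ≤ n → 3 * z n < 2 * (n : ℤ) ∧ ∀ w : ℤ, 3 * w < 2 * (n : ℤ) → w ≤ z n)
    (hm : ∀ n : ℕ, 1 ≤ n → (m n : ℤ) ^ 2 ≤ 2 * (n : ℤ) ∧ ∀ w : ℕ, (w : ℤ) ^ 2 ≤ 2 * (n : ℤ) → w ≤ m n)
    (hr : ∀ n : ℕ, 1 ≤ n → n ≤ 2 ^ r n ∧ ∀ s : ℕ, n ≤ 2 ^ s → r n ≤ s)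
    (hc : ∀ n : ℕ, c n = 2 * (n : ℤ) - 2 * z n + 2)
    (hx : ∀ n : ℕ, x n = z n - ((r n : ℤ) + 1) * (m n : ℤ))
    (hy : ∀ n : ℕ, y n = (2 : ℚ) ^ (c n - (m n : ℤ)) - (n : ℚ) ^ ((m n : ℤ) - 1)) :
    ∀ n : ℕ, 1 ≤ n →
      (x n < 0 ↔ n ≤ 435 ∨ n = 450 ∨ (513 ≤ n ∧ n ≤ 528)) :=
  stmt_general z m r x hz hm hr hx
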